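/- Define q(x) = (1/4)(x₁−1)² + (1/4)·Σᵢ₌₁^{T−1}(xᵢ − xᵢ₊₁)² on ℝᵀ. Then q(x) = (1/2)·∇q(x)ᵀ(x − 𝟏), and for any indices 1 ≤ j₁ < j₂ ≤ T, q(x) ≥ max{(1/4)(x₁−1)², (x_{j₁} − x_{j₂})²/(4(j₂−j₁))}, where 𝟏 is the all-ones vector. -/

import Mathlib

/-!
Along the line through `𝟏` and `x`, `q (𝟏 + t • (x - 𝟏)) = t ^ 2 * q x`, since every term of `q` is the
square of an affine function vanishing at `𝟏`; differentiating at `t = 1` (Euler's identity for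
homogeneous functions) gives `⟪∇q x, x - 𝟏⟫ = 2 q x`. For the lower bound, `x j₁ - x j₂` telescopes
into `j₂ - j₁` consecutive differences, so by Cauchy–Schwarz its square is at most `j₂ - j₁` times
`∑ (xᵢ - xᵢ₊₁)² ≤ 4 q x`.
-/

open RealInnerProductSpace

noncomputable def chainQuadratic (T : ℕ) (hT : 0 < T)
    (x : EuclideanSpace ℝ (Fin T)) : ℝ :=
  (1/4) * (x ⟨0, hT⟩ - 1)^2 +
    (1/4) * ∑ i : Fin (T - 1),
      (x (Fin.castLE (Nat.sub_le T 1) i) - x ⟨i.val + 1, Nat.add_lt_of_lt_sub i.isLt⟩)^2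

/-- The all-ones vector in `EuclideanSpace ℝ (Fin T)`. -/
noncomputable def allOnes (T : ℕ) : EuclideanSpace ℝ (Fin T) :=
  (WithLp.equiv 2 (Fin T → ℝ)).symm (fun _ => 1)

theorem inner_gradient_sub_eq_two_mul_of_sq_homogeneous {E : Type*} [NormedAddCommGroup E]
    [InnerProductSpace ℝ E] [CompleteSpace E] {f : E → ℝ} {p x : E}
    (hf : DifferentiableAt ℝ f x) (hhom : ∀ t : ℝ, f (p + t • (x - p)) = t ^ 2 * f x) :
    ⟪gradient f x, x - p⟫ = 2 * f x := by
  have hline : HasDerivAt (fun t : ℝ => p + t • (x - p)) (x - p) 1 := by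
    simpa using ((hasDerivAt_id (1 : ℝ)).smul_const (x - p)).const_add p
  have hcomp : HasDerivAt (fun t : ℝ => f (p + t • (x - p))) (fderiv ℝ f x (x - p)) 1 := by
    refine HasFDerivAt.comp_hasDerivAt (f := fun t : ℝ => p + t • (x - p)) 1 ?_ hline
    simpa using hf.hasFDerivAt
  have hsq : HasDerivAt (fun t : ℝ => t ^ 2 * f x) (2 * f x) 1 := by
    simpa using (hasDerivAt_pow 2 (1 : ℝ)).mul_const (f x)
  rw [inner_gradient_left]
  exact hcomp.unique (by simpa only [hhom] using hsq)

theorem sq_sub_le_card_mul_sum_sq_sub (y : ℕ → ℝ) {m n : ℕ} (hmn : m ≤ n) :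
    (y m - y n) ^ 2 ≤ (n - m : ℕ) * ∑ i ∈ Finset.Ico m n, (y i - y (i + 1)) ^ 2 := by
  have htel : y m - y n = ∑ i ∈ Finset.Ico m n, (y i - y (i + 1)) := by
    rw [← neg_sub, ← Finset.sum_Ico_sub y hmn, ← Finset.sum_neg_distrib]
    simp
  rw [htel, ← Nat.card_Ico]
  exact sq_sum_le_card_mul_sum_sq

theorem sq_sub_div_le_sum_range_sq_sub (y : ℕ → ℝ) {m n N : ℕ} (hmn : m < n) (hnN : n ≤ N) :
    (y m - y n) ^ 2 / (n - m : ℝ) ≤ ∑ i ∈ Finset.range N, (y i - y (i + 1)) ^ 2 := by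
  have hpos : (0 : ℝ) < n - m := sub_pos.mpr (Nat.cast_lt.mpr hmn)
  rw [div_le_iff₀ hpos, mul_comm]
  calc (y m - y n) ^ 2
      ≤ (n - m : ℕ) * ∑ i ∈ Finset.Ico m n, (y i - y (i + 1)) ^ 2 :=
        sq_sub_le_card_mul_sum_sq_sub y hmn.le
    _ ≤ (n - m : ℝ) * ∑ i ∈ Finset.range N, (y i - y (i + 1)) ^ 2 := by
      rw [Nat.cast_sub hmn.le]
      refine mul_le_mul_of_nonneg_left ?_ hpos.le
      refine Finset.sum_le_sum_of_subset_of_nonneg ?_ fun i _ _ => sq_nonneg _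
      intro i hi
      simp only [Finset.mem_Ico, Finset.mem_range] at hi ⊢
      omega

noncomputable def Fin.extendByZero {T : ℕ} (x : Fin T → ℝ) (n : ℕ) : ℝ :=
  if h : n < T then x ⟨n, h⟩ else 0

theorem Fin.extendByZero_apply {T : ℕ} (x : Fin T → ℝ) (i : Fin T) :
    Fin.extendByZero x i = x i := by
  simp [Fin.extendByZero]

section

variable (T : ℕ) (hT : 0 < T) (x : EuclideanSpace ℝ (Fin T))

theorem differentiable_chainQuadratic :
    Differentiable ℝ (chainQuadratic T hT) := by
  unfold chainQuadratic
  fun_prop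

theorem allOnes_apply (i : Fin T) : allOnes T i = 1 := rfl

theorem chainQuadratic_allOnes_add_smul_sub (t : ℝ) :
    chainQuadratic T hT (allOnes T + t • (x - allOnes T)) = t ^ 2 * chainQuadratic T hT x := by
  simp only [chainQuadratic, PiLp.add_apply, PiLp.smul_apply, PiLp.sub_apply, allOnes_apply,
    smul_eq_mul, mul_add, Finset.mul_sum]
  congr 1
  · ring
  · exact Finset.sum_congr rfl fun i _ => by ring

theorem chainQuadratic_eq_sum_range :
    chainQuadratic T hT x = (1/4) * (x ⟨0, hT⟩ - 1) ^ 2 + (1/4) *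
      ∑ i ∈ Finset.range (T - 1), (Fin.extendByZero x i - Fin.extendByZero x (i + 1)) ^ 2 := by
  rw [chainQuadratic, ← Fin.sum_univ_eq_sum_range]
  congr 2
  refine Finset.sum_congr rfl fun i _ => ?_
  have hi : (i : ℕ) < T := by omega
  simp only [Fin.extendByZero, dif_pos hi, dif_pos (Nat.add_lt_of_lt_sub i.isLt)]
  rfl

theorem sq_sub_one_le_chainQuadratic :
    (1/4) * (x ⟨0, hT⟩ - 1) ^ 2 ≤ chainQuadratic T hT x :=
  le_add_of_nonneg_right <| mul_nonneg (by norm_num) <| Finset.sum_nonneg fun _ _ => sq_nonneg _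

theorem sq_sub_div_le_chainQuadratic {j₁ j₂ : Fin T} (hj : j₁ < j₂) :
    (x j₁ - x j₂) ^ 2 / (4 * ((j₂ : ℝ) - (j₁ : ℝ))) ≤ chainQuadratic T hT x := by
  have h := sq_sub_div_le_sum_range_sq_sub (Fin.extendByZero x) hj (Nat.le_sub_one_of_lt j₂.isLt)
  rw [Fin.extendByZero_apply, Fin.extendByZero_apply] at h
  rw [chainQuadratic_eq_sum_range, mul_comm 4, ← div_div]
  linarith [sq_nonneg (x ⟨0, hT⟩ - 1)]

end

theorem chainQuadratic_properties (T : ℕ) (hT : 0 < T)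
    (x : EuclideanSpace ℝ (Fin T)) :
    chainQuadratic T hT x =
      (1/2) * ⟪gradient (chainQuadratic T hT) x, x - allOnes T⟫ ∧
    ∀ j₁ j₂ : Fin T, j₁ < j₂ →
      chainQuadratic T hT x ≥
        max ((1/4) * (x ⟨0, hT⟩ - 1)^2)
          ((x j₁ - x j₂)^2 / (4 * ((j₂ : ℝ) - (j₁ : ℝ)))) := by
  refine ⟨?_, fun j₁ j₂ hj => max_le (sq_sub_one_le_chainQuadratic T hT x)
    (sq_sub_div_le_chainQuadratic T hT x hj)⟩
  rw [inner_gradient_sub_eq_two_mul_of_sq_homogeneous (differentiable_chainQuadratic T hT x)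
    (chainQuadratic_allOnes_add_smul_sub T hT x)]
  ring
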